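/- arXiv:1803.01970 — 6 statements merged into one kernel-verified Lean document; each statement's English description precedes it below -/
import Mathlib

section
/- Let k ≥ 1 be a natural number and h : ℝ → ℝ a continuous function that is positive on [0, π] and satisfies h(θ) < h(0) for all θ ∈ (0, π]; set c* = h(0)^{-k}. For c ∈ [0, c*], define K(c) = ∫⁻_{θ∈(0,π)} ENNReal.ofReal( (c / √(1 − c² h(θ)^{2k})) · sin(θ)^{k−1} ) dθ (a Lebesgue integral with values in [0,∞]). Then K(c) tends to K(c*) as c tends to c* from the left. -/
open Real MeasureTheory Filter

/-- The extended-real-valued cohomology integral `K(c)` tends to `K(c*)` as `c → c*⁻`,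
where `c* = h(0)⁻ᵏ` (the value `K(c*) = ∞` is allowed). -/
theorem kappa_tendsto_left (k : ℕ) (hk : 1 ≤ k) (h : ℝ → ℝ)
    (hcont : Continuous h) (hpos : ∀ θ ∈ Set.Icc (0 : ℝ) π, 0 < h θ)
    (hmax : ∀ θ ∈ Set.Ioc (0 : ℝ) π, h θ < h 0) :
    let cstar : ℝ := (h 0 ^ k)⁻¹
    let K : ℝ → ENNReal := fun c =>
      ∫⁻ θ in Set.Ioo (0 : ℝ) π,
        ENNReal.ofReal ((c / Real.sqrt (1 - c ^ 2 * h θ ^ (2 * k))) * Real.sin θ ^ (k - 1))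
    Tendsto K (nhdsWithin cstar (Set.Iio cstar)) (nhds (K cstar)) := by
  intro cstar K
  have h0pos : 0 < h 0 := hpos 0 ⟨le_refl 0, Real.pi_pos.le⟩
  have hcstar_pos : 0 < cstar := inv_pos.mpr (pow_pos h0pos k)
  have hcs2 : cstar ^ 2 = (h 0 ^ (2 * k))⁻¹ := by
    show ((h 0 ^ k)⁻¹) ^ 2 = (h 0 ^ (2 * k))⁻¹
    rw [inv_pow, ← pow_mul, mul_comm]
  -- key positivity of the square-root argument at `cstar`, for θ ∈ Ioo 0 π
  have key : ∀ θ ∈ Set.Ioo (0 : ℝ) π, 0 < 1 - cstar ^ 2 * h θ ^ (2 * k) := by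
    intro θ hθ
    have hθpos : 0 < h θ := hpos θ ⟨hθ.1.le, hθ.2.le⟩
    have h1 : h θ ^ (2 * k) < h 0 ^ (2 * k) :=
      pow_lt_pow_left₀ (hmax θ ⟨hθ.1, hθ.2.le⟩) hθpos.le (by omega)
    have heq : cstar ^ 2 * h θ ^ (2 * k) = h θ ^ (2 * k) / h 0 ^ (2 * k) := by
      rw [hcs2]; ring
    have : cstar ^ 2 * h θ ^ (2 * k) < 1 := by
      rw [heq]
      exact (div_lt_one (pow_pos h0pos _)).mpr h1
    linarith
  -- the integrand, as a function of c and θ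
  set f : ℝ → ℝ → ENNReal := fun c θ =>
    ENNReal.ofReal ((c / Real.sqrt (1 - c ^ 2 * h θ ^ (2 * k))) * Real.sin θ ^ (k - 1)) with hf
  -- measurability in θ
  have hmeas : ∀ c : ℝ, Measurable (fun θ => f c θ) := by
    intro c
    apply ENNReal.measurable_ofReal.comp
    apply Measurable.mul
    · exact measurable_const.div
        ((Real.continuous_sqrt.comp
          (continuous_const.sub (continuous_const.mul (hcont.pow _)))).measurable)
    · exact (Real.continuous_sin.pow _).measurable
  -- monotonicity: for c ≤ cstar and θ ∈ Ioo 0 π, f c θ ≤ f cstar θ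
  have hmono : ∀ c : ℝ, c ≤ cstar → ∀ θ ∈ Set.Ioo (0 : ℝ) π, f c θ ≤ f cstar θ := by
    intro c hc θ hθ
    have hS : (0 : ℝ) ≤ Real.sin θ ^ (k - 1) :=
      pow_nonneg (Real.sin_nonneg_of_nonneg_of_le_pi hθ.1.le hθ.2.le) _
    rcases le_or_gt c 0 with hc0 | hc0
    · have : (c / Real.sqrt (1 - c ^ 2 * h θ ^ (2 * k))) * Real.sin θ ^ (k - 1) ≤ 0 :=
        mul_nonpos_of_nonpos_of_nonneg
          (div_nonpos_iff.mpr (Or.inr ⟨hc0, Real.sqrt_nonneg _⟩)) hS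
      simp [hf, ENNReal.ofReal_eq_zero.mpr this]
    · -- 0 < c ≤ cstar
      have hBpos : 0 < 1 - cstar ^ 2 * h θ ^ (2 * k) := key θ hθ
      have hc2 : c ^ 2 ≤ cstar ^ 2 := pow_le_pow_left₀ hc0.le hc 2
      have hHnn : (0 : ℝ) ≤ h θ ^ (2 * k) := pow_nonneg (hpos θ ⟨hθ.1.le, hθ.2.le⟩).le _
      have hAB : 1 - cstar ^ 2 * h θ ^ (2 * k) ≤ 1 - c ^ 2 * h θ ^ (2 * k) := by
        nlinarith
      have hsqB : 0 < Real.sqrt (1 - cstar ^ 2 * h θ ^ (2 * k)) := Real.sqrt_pos.mpr hBpos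
      have hsq : Real.sqrt (1 - cstar ^ 2 * h θ ^ (2 * k))
          ≤ Real.sqrt (1 - c ^ 2 * h θ ^ (2 * k)) := Real.sqrt_le_sqrt hAB
      have hdiv : c / Real.sqrt (1 - c ^ 2 * h θ ^ (2 * k))
          ≤ cstar / Real.sqrt (1 - cstar ^ 2 * h θ ^ (2 * k)) :=
        div_le_div₀ hcstar_pos.le hc hsqB hsq
      exact ENNReal.ofReal_le_ofReal (mul_le_mul_of_nonneg_right hdiv hS)
  -- pointwise continuity at cstar
  have hcontpt : ∀ θ ∈ Set.Ioo (0 : ℝ) π,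
      ContinuousAt (fun c : ℝ => f c θ) cstar := by
    intro θ hθ
    have hne : Real.sqrt (1 - cstar ^ 2 * h θ ^ (2 * k)) ≠ 0 :=
      ne_of_gt (Real.sqrt_pos.mpr (key θ hθ))
    apply ENNReal.continuous_ofReal.continuousAt.comp
    apply ContinuousAt.mul _ continuousAt_const
    exact ContinuousAt.div continuousAt_id
      ((Real.continuous_sqrt.comp
        (continuous_const.sub ((continuous_pow 2).mul continuous_const))).continuousAt) hne
  -- reduce to sequences
  rw [tendsto_iff_seq_tendsto]
  intro u hu
  have hu' : Tendsto u atTop (nhds cstar) := hu.mono_right nhdsWithin_le_nhds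
  have humem : ∀ᶠ n in atTop, u n ∈ Set.Iio cstar := hu self_mem_nhdsWithin
  -- pointwise convergence of integrands
  have htendpt : ∀ θ ∈ Set.Ioo (0 : ℝ) π,
      Tendsto (fun n => f (u n) θ) atTop (nhds (f cstar θ)) := by
    intro θ hθ
    exact ((hcontpt θ hθ).tendsto).comp hu'
  -- Fatou: K cstar ≤ liminf
  have hliminf : K cstar ≤ Filter.liminf (fun n => K (u n)) atTop := by
    have hcong : K cstar
        = ∫⁻ θ in Set.Ioo (0 : ℝ) π, Filter.liminf (fun n => f (u n) θ) atTop := by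
      apply lintegral_congr_ae
      filter_upwards [ae_restrict_mem measurableSet_Ioo] with θ hθ
      exact ((htendpt θ hθ).liminf_eq).symm
    rw [hcong]
    exact lintegral_liminf_le (fun n => hmeas (u n))
  -- domination: limsup ≤ K cstar
  have hlimsup : Filter.limsup (fun n => K (u n)) atTop ≤ K cstar := by
    refine Filter.limsup_le_of_le (by isBoundedDefault) ?_
    filter_upwards [humem] with n hn
    apply lintegral_mono_ae
    filter_upwards [ae_restrict_mem measurableSet_Ioo] with θ hθ
    exact hmono (u n) (le_of_lt hn) θ hθ
  exact tendsto_of_le_liminf_of_limsup_le hliminf hlimsup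
end

section
/- Let k ≥ 2 be a natural number and h : ℝ → ℝ a twice continuously differentiable function that is positive on [0, π], satisfies h(θ) < h(0) for all θ ∈ (0, π], h'(0) = 0, and h''(0) < 0. Then the function θ ↦ sin(θ)^{k−1} / √(1 − (h(θ)/h(0))^{2k}) is integrable on the interval (0, π). -/
/-!
Since `h'(0) = 0` and `h''(0) < 0`, the mean value theorem gives `h(0) - h(θ) ≥ c θ²` near `0`,
and compactness extends this to all of `(0, π]`. As `1 - x ^ (2k) ≥ 1 - x` on `[0, 1]`, the
denominator is at least `√(c / h(0)) θ`, while the numerator is at most `θ ^ (k - 1)`; for `k ≥ 2`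
the integrand is therefore bounded by `π ^ (k - 2) / √(c / h(0))` on a set of finite measure.
-/

open Real MeasureTheory Set Filter Topology

theorem eventually_mul_sq_lt_sub_of_deriv_eq_zero {h : ℝ → ℝ} {c : ℝ} (hh : Differentiable ℝ h)
    (hd1 : deriv h 0 = 0) (hd2 : DifferentiableAt ℝ (deriv h) 0)
    (hc : c < -deriv (deriv h) 0 / 2) :
    ∀ᶠ θ in 𝓝[>] 0, c * θ ^ 2 < h 0 - h θ := by
  have hslope : Tendsto (fun θ => θ⁻¹ * deriv h θ) (𝓝[>] 0) (𝓝 (deriv (deriv h) 0)) := by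
    simpa [hd1] using hd2.hasDerivAt.tendsto_slope_zero_right
  obtain ⟨u, hu0, hu⟩ := mem_nhdsGT_iff_exists_Ioo_subset.mp
    (hslope.eventually_lt_const (show deriv (deriv h) 0 < -2 * c by linarith))
  have hφ' (x : ℝ) :
      HasDerivAt (fun θ => h 0 - h θ - c * θ ^ 2) (-deriv h x - c * (2 * x)) x := by
    refine (((hh x).hasDerivAt.const_sub (h 0)).sub
      ((hasDerivAt_pow 2 x).const_mul c)).congr_deriv ?_
    norm_num
  have hmono : StrictMonoOn (fun θ => h 0 - h θ - c * θ ^ 2) (Ico 0 u) := by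
    refine strictMonoOn_of_deriv_pos (convex_Ico 0 u)
      (fun x _ => (hφ' x).continuousAt.continuousWithinAt) fun x hx => ?_
    rw [interior_Ico] at hx
    have hderiv : deriv h x < x * (-2 * c) := (inv_mul_lt_iff₀ hx.1).mp (hu hx)
    rw [(hφ' x).deriv]
    linarith
  filter_upwards [Ioo_mem_nhdsGT hu0] with θ hθ
  have hlt := hmono (left_mem_Ico.mpr hu0) (Ioo_subset_Ico_self hθ) hθ.1
  simp only at hlt
  linarith

theorem exists_pos_mul_sq_le_sub {h : ℝ → ℝ} {b c : ℝ} (hcont : ContinuousOn h (Icc 0 b))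
    (hlt : ∀ θ ∈ Ioc 0 b, h θ < h 0) (hc : 0 < c)
    (hnear : ∀ᶠ θ in 𝓝[>] 0, c * θ ^ 2 < h 0 - h θ) :
    ∃ c' > 0, ∀ θ ∈ Ioc 0 b, c' * θ ^ 2 ≤ h 0 - h θ := by
  rcases le_or_gt b 0 with hb | hb
  · exact ⟨c, hc, fun θ hθ => absurd (hθ.1.trans_le hθ.2) hb.not_gt⟩
  obtain ⟨u, hu0, hu⟩ := mem_nhdsGT_iff_exists_Ioo_subset.mp hnear
  set v := min u b
  have hv : 0 < v := lt_min hu0 hb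
  obtain ⟨θm, hθm, hmin⟩ := isCompact_Icc.exists_isMinOn (nonempty_Icc.mpr (min_le_right u b))
    ((continuousOn_const.sub hcont).mono (Icc_subset_Icc hv.le le_rfl))
  have hδ : 0 < h 0 - h θm := sub_pos.mpr (hlt θm ⟨hv.trans_le hθm.1, hθm.2⟩)
  refine ⟨min c ((h 0 - h θm) / b ^ 2), by positivity, fun θ hθ => ?_⟩
  rcases lt_or_ge θ v with hθv | hθv
  · calc min c ((h 0 - h θm) / b ^ 2) * θ ^ 2 ≤ c * θ ^ 2 := by gcongr; exact min_le_left _ _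
      _ ≤ h 0 - h θ := (hu ⟨hθ.1, hθv.trans_le (min_le_left u b)⟩).le
  · calc min c ((h 0 - h θm) / b ^ 2) * θ ^ 2 ≤ (h 0 - h θm) / b ^ 2 * b ^ 2 := by
          gcongr
          exacts [min_le_right _ _, hθ.1.le, hθ.2]
      _ = h 0 - h θm := div_mul_cancel₀ _ (by positivity)
      _ ≤ h 0 - h θ := hmin ⟨hθv, hθ.2⟩

theorem sin_pow_div_sqrt_le {k : ℕ} (hk : 2 ≤ k) {θ c D : ℝ} (hθ : θ ∈ Ioo 0 π) (hc : 0 < c)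
    (hD : c * θ ^ 2 ≤ D) :
    sin θ ^ (k - 1) / √D ≤ π ^ (k - 2) / √c := by
  have hsin : 0 ≤ sin θ := sin_nonneg_of_nonneg_of_le_pi hθ.1.le hθ.2.le
  have hden : √c * θ ≤ √D := by
    rw [← sqrt_sq hθ.1.le, ← sqrt_mul hc.le]
    exact sqrt_le_sqrt hD
  have hθ0 := hθ.1
  calc sin θ ^ (k - 1) / √D ≤ θ ^ (k - 1) / (√c * θ) :=
        div_le_div₀ (by positivity) (pow_le_pow_left₀ hsin (sin_le hθ.1.le) _) (by positivity) hden
    _ = θ ^ (k - 2) / √c := by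
        rw [show k - 1 = k - 2 + 1 by omega, pow_succ]
        field_simp
    _ ≤ π ^ (k - 2) / √c := by gcongr; exact hθ.2.le

/-- For `k ≥ 2`, the limiting cohomology integrand
`θ ↦ sin(θ)^{k−1} / √(1 − (h(θ)/h(0))^{2k})` is integrable on `(0, π)`. -/
theorem limiting_integrand_integrable (k : ℕ) (hk : 2 ≤ k) (h : ℝ → ℝ)
    (hC2 : ContDiff ℝ 2 h) (hpos : ∀ θ ∈ Set.Icc (0 : ℝ) π, 0 < h θ)
    (hmax : ∀ θ ∈ Set.Ioc (0 : ℝ) π, h θ < h 0)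
    (hd1 : deriv h 0 = 0) (hd2 : deriv (deriv h) 0 < 0) :
    IntegrableOn
      (fun θ => Real.sin θ ^ (k - 1) / Real.sqrt (1 - (h θ / h 0) ^ (2 * k)))
      (Set.Ioo (0 : ℝ) π) := by
  have hh0 : 0 < h 0 := hpos 0 ⟨le_rfl, pi_pos.le⟩
  have hdh : Differentiable ℝ (deriv h) :=
    (hC2.iterate_deriv' 1 1).differentiable one_ne_zero
  have hnear := eventually_mul_sq_lt_sub_of_deriv_eq_zero (c := -deriv (deriv h) 0 / 4)
    (hC2.differentiable two_ne_zero) hd1 (hdh 0) (by linarith)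
  obtain ⟨c, hc, hquad⟩ := exists_pos_mul_sq_le_sub hC2.continuous.continuousOn hmax
    (by linarith) hnear
  have hden : ∀ θ ∈ Ioo 0 π, c / h 0 * θ ^ 2 ≤ 1 - (h θ / h 0) ^ (2 * k) := fun θ hθ => by
    have hx0 : 0 ≤ h θ / h 0 := (div_pos (hpos θ (Ioo_subset_Icc_self hθ)) hh0).le
    have hx1 : h θ / h 0 ≤ 1 := div_le_one_of_le₀ (hmax θ (Ioo_subset_Ioc_self hθ)).le hh0.le
    calc c / h 0 * θ ^ 2 = c * θ ^ 2 / h 0 := div_mul_eq_mul_div _ _ _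
      _ ≤ (h 0 - h θ) / h 0 := by gcongr; exact hquad θ (Ioo_subset_Ioc_self hθ)
      _ = 1 - h θ / h 0 := by field_simp
      _ ≤ 1 - (h θ / h 0) ^ (2 * k) := by gcongr; exact pow_le_of_le_one hx0 hx1 (by omega)
  have hmeas := hC2.continuous.measurable
  refine Measure.integrableOn_of_bounded measure_Ioo_lt_top.ne
    (by fun_prop : Measurable _).aestronglyMeasurable (M := π ^ (k - 2) / √(c / h 0)) ?_
  filter_upwards [ae_restrict_mem measurableSet_Ioo] with θ hθ
  rw [norm_of_nonneg
    (div_nonneg (pow_nonneg (sin_nonneg_of_nonneg_of_le_pi hθ.1.le hθ.2.le) _) (sqrt_nonneg _))]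
  exact sin_pow_div_sqrt_le hk hθ (by positivity) (hden θ hθ)
end

section
/- Let F be an n×n real matrix with Fᵀ = −F. Then the matrices 1 − F and 1 − F·F are invertible, and (1/2)·((1 − F)⁻¹ − ((1 − F)⁻¹)ᵀ) = (1 − F·F)⁻¹ · F, i.e., the antisymmetric part of (1 − F)⁻¹ equals (1 − F²)⁻¹ F. -/
open Matrix

private lemma comm_inv {n : ℕ} {A X : Matrix (Fin n) (Fin n) ℝ}
    (hA : IsUnit A) (h : X * A = A * X) : X * A⁻¹ = A⁻¹ * X := by
  have hd := (Matrix.isUnit_iff_isUnit_det A).mp hA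
  calc X * A⁻¹ = A⁻¹ * (A * X) * A⁻¹ := by
        rw [← Matrix.mul_assoc, Matrix.nonsing_inv_mul _ hd, Matrix.one_mul]
    _ = A⁻¹ * (X * (A * A⁻¹)) := by rw [← h]; simp [Matrix.mul_assoc]
    _ = A⁻¹ * X := by rw [Matrix.mul_nonsing_inv _ hd, Matrix.mul_one]

/-- For an antisymmetric real matrix `F`, the matrices `1 − F` and `1 − F·F` are
invertible and the antisymmetric part of `(1 − F)⁻¹` equals `(1 − F²)⁻¹ F`. -/
theorem antisymm_part_inv_one_sub {n : ℕ} (F : Matrix (Fin n) (Fin n) ℝ)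
    (hF : Fᵀ = -F) :
    IsUnit (1 - F) ∧ IsUnit (1 - F * F) ∧
      ((1 : ℝ) / 2) • ((1 - F)⁻¹ - ((1 - F)⁻¹)ᵀ) = (1 - F * F)⁻¹ * F := by
  set A := 1 - F with hAdef
  set B := 1 + F with hBdef
  -- antisymmetric pairing is zero
  have hvFv : ∀ v : Fin n → ℝ, v ⬝ᵥ (F *ᵥ v) = 0 := by
    intro v
    have h1 : v ⬝ᵥ (F *ᵥ v) = (Fᵀ *ᵥ v) ⬝ᵥ v := by
      rw [Matrix.dotProduct_mulVec, ← Matrix.mulVec_transpose]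
    rw [hF, Matrix.neg_mulVec, neg_dotProduct, dotProduct_comm] at h1
    rw [dotProduct_comm]
    linarith
  -- 1 - F is a unit
  have hAunit : IsUnit A := by
    rw [Matrix.isUnit_iff_isUnit_det, isUnit_iff_ne_zero]
    intro hdet
    obtain ⟨v, hv, hv0⟩ := (Matrix.exists_mulVec_eq_zero_iff).mpr hdet
    have hvF : F *ᵥ v = v := by
      have : (1 - F) *ᵥ v = v - F *ᵥ v := by
        rw [Matrix.sub_mulVec, Matrix.one_mulVec]
      rw [hAdef, this] at hv0
      linear_combination (norm := module) -hv0
    have : v ⬝ᵥ v = 0 := by have h := hvFv v; rwa [hvF] at h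
    exact hv (by simpa using (dotProduct_self_eq_zero).mp this)
  have hAT : Aᵀ = B := by
    rw [hAdef, hBdef, Matrix.transpose_sub, Matrix.transpose_one, hF, sub_neg_eq_add]
  have hBunit : IsUnit B := by
    rw [← hAT, Matrix.isUnit_iff_isUnit_det, Matrix.det_transpose,
      ← Matrix.isUnit_iff_isUnit_det]
    exact hAunit
  have hAB : A * B = 1 - F * F := by rw [hAdef, hBdef]; noncomm_ring
  have hBA : B * A = 1 - F * F := by rw [hAdef, hBdef]; noncomm_ring
  have hCunit : IsUnit (1 - F * F) := by rw [← hAB]; exact hAunit.mul hBunit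
  refine ⟨hAunit, hCunit, ?_⟩
  have hdA := (Matrix.isUnit_iff_isUnit_det A).mp hAunit
  have hdB := (Matrix.isUnit_iff_isUnit_det B).mp hBunit
  -- commutations
  have hFB : F * B = B * F := by rw [hBdef]; noncomm_ring
  have hABc : A * B = B * A := by rw [hAB, hBA]
  have hFBinv : F * B⁻¹ = B⁻¹ * F := comm_inv hBunit hFB
  have hABinv : A * B⁻¹ = B⁻¹ * A := comm_inv hBunit hABc
  -- transpose of inverse
  have hTinv : ((1 - F)⁻¹)ᵀ = B⁻¹ := by
    rw [← hAdef, Matrix.transpose_nonsing_inv, hAT]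
  rw [hTinv]
  -- cancellation: show A * LHS * B = A * RHS * B
  have key : A * (((1 : ℝ) / 2) • (A⁻¹ - B⁻¹)) * B
      = A * ((1 - F * F)⁻¹ * F) * B := by
    have lhs : A * (((1 : ℝ) / 2) • (A⁻¹ - B⁻¹)) * B = ((1 : ℝ) / 2) • (B - A) := by
      rw [mul_smul_comm, smul_mul_assoc]
      congr 1
      calc A * (A⁻¹ - B⁻¹) * B = (A * A⁻¹) * B - (A * B⁻¹) * B := by
            rw [Matrix.mul_sub, Matrix.sub_mul]
        _ = B - A := by
            rw [Matrix.mul_nonsing_inv _ hdA, Matrix.one_mul, hABinv,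
              Matrix.mul_assoc, hABc, ← Matrix.mul_assoc,
              Matrix.nonsing_inv_mul _ hdB, Matrix.one_mul]
    have hBA2 : B - A = (2 : ℝ) • F := by
      rw [hAdef, hBdef]
      module
    have rhs : A * ((1 - F * F)⁻¹ * F) * B = F := by
      rw [← hAB, Matrix.mul_inv_rev]
      calc A * (B⁻¹ * A⁻¹ * F) * B
          = (A * B⁻¹) * (A⁻¹ * F * B) := by simp [Matrix.mul_assoc]
        _ = B⁻¹ * (A * A⁻¹) * (F * B) := by rw [hABinv]; simp [Matrix.mul_assoc]
        _ = B⁻¹ * (B * F) := by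
            rw [Matrix.mul_nonsing_inv _ hdA, Matrix.mul_one, hFB]
        _ = F := by rw [← Matrix.mul_assoc, Matrix.nonsing_inv_mul _ hdB, Matrix.one_mul]
    rw [lhs, rhs, hBA2, smul_smul]
    norm_num
  -- cancel A on the left and B on the right
  have cancel : ∀ X Y : Matrix (Fin n) (Fin n) ℝ, A * X * B = A * Y * B → X = Y := by
    intro X Y h
    have h2 : A⁻¹ * (A * X * B) * B⁻¹ = A⁻¹ * (A * Y * B) * B⁻¹ := by rw [h]
    have e : ∀ Z : Matrix (Fin n) (Fin n) ℝ, A⁻¹ * (A * Z * B) * B⁻¹ = Z := by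
      intro Z
      rw [show A * Z * B = A * (Z * B) from by rw [Matrix.mul_assoc],
        ← Matrix.mul_assoc, Matrix.nonsing_inv_mul _ hdA, Matrix.one_mul,
        Matrix.mul_assoc, Matrix.mul_nonsing_inv _ hdB, Matrix.mul_one]
    rwa [e, e] at h2
  exact cancel _ _ key
end

section
/- Let F and A be n×n real matrices with Fᵀ = −F and Aᵀ = −A. Then trace((1 − F)⁻¹ · A) = trace((1 − F·F)⁻¹ · F · A), where 1 denotes the n×n identity matrix. -/
open Matrix

/-- For antisymmetric real matrices `F` and `A`,
`trace((1 − F)⁻¹ A) = trace((1 − F·F)⁻¹ F A)`. -/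
theorem trace_inv_one_sub_antisymm {n : ℕ} (F A : Matrix (Fin n) (Fin n) ℝ)
    (hF : Fᵀ = -F) (hA : Aᵀ = -A) :
    ((1 - F)⁻¹ * A).trace = ((1 - F * F)⁻¹ * F * A).trace := by
  classical
  -- 1 - F*F = 1 + Fᵀ*F is positive definite
  have hpd : (1 - F * F).PosDef := by
    have h1 : (1 : Matrix (Fin n) (Fin n) ℝ) - F * F = 1 + Fᵀ * F := by
      rw [hF]; noncomm_ring
    rw [h1]
    exact Matrix.PosDef.one.add_posSemidef
      (by simpa using Matrix.posSemidef_conjTranspose_mul_self F)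
  have hdetprod : (1 - F * F).det = (1 - F).det * (1 + F).det := by
    rw [show (1 : Matrix (Fin n) (Fin n) ℝ) - F * F = (1 - F) * (1 + F) by noncomm_ring,
      Matrix.det_mul]
  have hdet_eq : (1 + F).det = (1 - F).det := by
    have := Matrix.det_transpose (1 - F)
    rwa [Matrix.transpose_sub, Matrix.transpose_one, hF, sub_neg_eq_add] at this
  have hdetpos := hpd.det_pos
  have hdet1 : IsUnit (1 - F).det := by
    rw [hdetprod, hdet_eq] at hdetpos
    exact isUnit_iff_ne_zero.mpr (by nlinarith)
  have hdet2 : IsUnit (1 + F).det := by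
    rw [hdet_eq]; exact hdet1
  have hdet3 : IsUnit (1 - F * F).det := isUnit_iff_ne_zero.mpr (ne_of_gt hdetpos)
  -- transpose of (1-F)⁻¹ is (1+F)⁻¹
  have htr : ((1 - F)⁻¹)ᵀ = (1 + F)⁻¹ := by
    rw [Matrix.transpose_nonsing_inv, Matrix.transpose_sub, Matrix.transpose_one, hF,
      sub_neg_eq_add]
  -- step 1: trace((1-F)⁻¹ A) = - trace((1+F)⁻¹ A)
  have h1 : ((1 - F)⁻¹ * A).trace = -(((1 + F)⁻¹ * A)).trace := by
    calc ((1 - F)⁻¹ * A).trace = (((1 - F)⁻¹ * A)ᵀ).trace := (Matrix.trace_transpose _).symm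
      _ = (Aᵀ * ((1 - F)⁻¹)ᵀ).trace := by rw [Matrix.transpose_mul]
      _ = ((-A) * (1 + F)⁻¹).trace := by rw [hA, htr]
      _ = -(((1 + F)⁻¹ * A)).trace := by
          rw [Matrix.neg_mul, Matrix.trace_neg, Matrix.trace_mul_comm]
  -- invertibility instances
  have i1 : Invertible (1 - F) := (1 - F).invertibleOfIsUnitDet hdet1
  have i2 : Invertible (1 + F) := (1 + F).invertibleOfIsUnitDet hdet2
  -- step 2: (1-F)⁻¹ - (1+F)⁻¹ = 2 • ((1 - F*F)⁻¹ * F)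
  have hcomm : (1 - F)⁻¹ * F = F * (1 - F)⁻¹ := by
    have hc : Commute (1 - F) F := (Commute.one_left F).sub_left (Commute.refl F)
    have := hc.invOf_left
    rwa [Matrix.invOf_eq_nonsing_inv] at this
  have hinv_prod : (1 - F * F)⁻¹ = (1 + F)⁻¹ * (1 - F)⁻¹ := by
    rw [show (1 : Matrix (Fin n) (Fin n) ℝ) - F * F = (1 - F) * (1 + F) by noncomm_ring,
      Matrix.mul_inv_rev]
  have h2 : (1 - F)⁻¹ - (1 + F)⁻¹ = (2 : ℝ) • ((1 - F * F)⁻¹ * F) := by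
    have e1 : (1 - F)⁻¹ - (1 + F)⁻¹
        = (1 + F)⁻¹ * ((1 + F) - (1 - F)) * (1 - F)⁻¹ := by
      rw [Matrix.mul_sub, Matrix.sub_mul, Matrix.nonsing_inv_mul _ hdet2]
      rw [Matrix.mul_assoc, Matrix.mul_nonsing_inv _ hdet1]
      rw [Matrix.one_mul, Matrix.mul_one]
    rw [e1, show (1 + F) - (1 - F) = (2:ℝ) • F by module]
    rw [hinv_prod]
    rw [Matrix.mul_smul, Matrix.smul_mul, Matrix.mul_assoc, ← hcomm, ← Matrix.mul_assoc]
  -- conclude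
  have h3 : ((1 - F)⁻¹ * A).trace - (((1 + F)⁻¹ * A)).trace
      = (2 : ℝ) * ((1 - F * F)⁻¹ * F * A).trace := by
    rw [← Matrix.trace_sub, ← Matrix.sub_mul, h2, Matrix.smul_mul, Matrix.trace_smul,
      smul_eq_mul]
  rw [h1] at h3 ⊢
  linarith
end

section
/- Let F be a 4×4 real matrix with Fᵀ = −F, and set s = F₁₂² + F₁₃² + F₁₄² + F₂₃² + F₂₄² + F₃₄². Then 1 + s ≤ det(1 − F) ≤ (1 + s/2)², where 1 denotes the 4×4 identity matrix. -/
open Matrix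

/-!
Writing `a, …, f` for the entries above the diagonal, a direct expansion gives
`det (1 - F) = 1 + s + p²` with `p = a f - b e + c d` the Pfaffian of `F`, which yields the lower
bound. For the upper bound, `s² - 4 p² = (s - 2 p) (s + 2 p)` and both factors are sums of three
squares, so `p² ≤ (s / 2)²`.
-/

theorem Matrix.eq_of_transpose_eq_neg_fin_four {R : Type*} [AddGroup R] [IsAddTorsionFree R]
    (F : Matrix (Fin 4) (Fin 4) R) (hF : Fᵀ = -F) :
    F = !![0, F 0 1, F 0 2, F 0 3;
          -F 0 1, 0, F 1 2, F 1 3;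
          -F 0 2, -F 1 2, 0, F 2 3;
          -F 0 3, -F 1 3, -F 2 3, 0] := by
  have h i j : F j i = -F i j := by simpa using congrFun (congrFun hF i) j
  have hdiag i : F i i = 0 := self_eq_neg.mp (h i i)
  ext i j
  fin_cases i <;> fin_cases j <;> simp [hdiag, h 0 1, h 0 2, h 0 3, h 1 2, h 1 3, h 2 3]

theorem Matrix.det_one_sub_antisymm_fin_four {R : Type*} [CommRing R] (a b c d e f : R) :
    (1 - !![0, a, b, c; -a, 0, d, e; -b, -d, 0, f; -c, -e, -f, 0]).det =
      1 + (a ^ 2 + b ^ 2 + c ^ 2 + d ^ 2 + e ^ 2 + f ^ 2) + (a * f - b * e + c * d) ^ 2 := by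
  have hsub : (1 - !![0, a, b, c; -a, 0, d, e; -b, -d, 0, f; -c, -e, -f, 0]) =
      !![1, -a, -b, -c; a, 1, -d, -e; b, d, 1, -f; c, e, f, 1] := by
    ext i j
    fin_cases i <;> fin_cases j <;> simp
  rw [hsub, det_succ_row_zero]
  simp [Fin.sum_univ_four, det_fin_three, Fin.succAbove]
  ring

theorem sq_pfaffian_le {R : Type*} [Field R] [LinearOrder R] [IsStrictOrderedRing R]
    (a b c d e f : R) :
    (a * f - b * e + c * d) ^ 2 ≤ ((a ^ 2 + b ^ 2 + c ^ 2 + d ^ 2 + e ^ 2 + f ^ 2) / 2) ^ 2 := by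
  have hfactor :
      ((a ^ 2 + b ^ 2 + c ^ 2 + d ^ 2 + e ^ 2 + f ^ 2) / 2) ^ 2 - (a * f - b * e + c * d) ^ 2 =
        ((a - f) ^ 2 + (b + e) ^ 2 + (c - d) ^ 2) *
          ((a + f) ^ 2 + (b - e) ^ 2 + (c + d) ^ 2) / 4 := by
    ring
  rw [← sub_nonneg, hfactor]
  positivity

/-- For a `4×4` antisymmetric real matrix `F` with `s = |F|²`,
`1 + s ≤ det(1 − F) ≤ (1 + s/2)²`. -/
theorem det_one_sub_antisymm_four_bounds (F : Matrix (Fin 4) (Fin 4) ℝ)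
    (hF : Fᵀ = -F) :
    1 + (F 0 1 ^ 2 + F 0 2 ^ 2 + F 0 3 ^ 2 + F 1 2 ^ 2 + F 1 3 ^ 2 + F 2 3 ^ 2)
        ≤ (1 - F).det ∧
      (1 - F).det ≤
        (1 + (F 0 1 ^ 2 + F 0 2 ^ 2 + F 0 3 ^ 2 + F 1 2 ^ 2 + F 1 3 ^ 2 + F 2 3 ^ 2) / 2) ^ 2 := by
  set s := F 0 1 ^ 2 + F 0 2 ^ 2 + F 0 3 ^ 2 + F 1 2 ^ 2 + F 1 3 ^ 2 + F 2 3 ^ 2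
  set p := F 0 1 * F 2 3 - F 0 2 * F 1 3 + F 0 3 * F 1 2
  have hdet : (1 - F).det = 1 + s + p ^ 2 := by
    conv_lhs => rw [F.eq_of_transpose_eq_neg_fin_four hF]
    exact det_one_sub_antisymm_fin_four ..
  have hp : p ^ 2 ≤ (s / 2) ^ 2 := sq_pfaffian_le ..
  have hsq : (1 + s / 2) ^ 2 = 1 + s + (s / 2) ^ 2 := by ring
  rw [hdet, hsq]
  exact ⟨le_add_of_nonneg_right (sq_nonneg p), by linarith⟩
end

section
/- Let (X, μ) be a measure space with μ(X) < ∞, let E be a real normed vector space, let f and f_n (n ∈ ℕ) be integrable functions X → E with ∫_X ‖f_n(x) − f(x)‖ dμ → 0, and let t_n be positive reals with t_n → ∞. Then ∫_X ‖f(x)‖ dμ ≤ liminf_{n→∞} ∫_X √(t_n⁻² + ‖f_n(x)‖²) dμ. -/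
/-!
Since `|a| ≤ √(s² + a²) ≤ |s| + |a|`, on a finite measure space the energy
`∫ √(tₙ⁻² + ‖fₙ‖²)` is squeezed between `∫ ‖fₙ‖` and `|tₙ⁻¹| μ(X) + ∫ ‖fₙ‖`. By the reverse
triangle inequality `∫ ‖fₙ‖ → ∫ ‖f‖`, so the energies actually converge to `∫ ‖f‖`.
-/

open MeasureTheory Filter Topology

namespace Real

theorem abs_le_sqrt_sq_add_sq (s a : ℝ) : |a| ≤ √(s ^ 2 + a ^ 2) :=
  abs_le_sqrt (le_add_of_nonneg_left (sq_nonneg s))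

theorem sqrt_sq_add_sq_le_abs_add_abs (s a : ℝ) : √(s ^ 2 + a ^ 2) ≤ |s| + |a| := by
  rw [sqrt_le_left (by positivity)]
  nlinarith [sq_abs s, sq_abs a, abs_nonneg s, abs_nonneg a]

end Real

section SmoothedNorm

variable {X E : Type*} [MeasurableSpace X] {μ : Measure X} [NormedAddCommGroup E]

theorem MeasureTheory.Integrable.sqrt_sq_add_norm_sq [IsFiniteMeasure μ] {g : X → E}
    (hg : Integrable g μ) (s : ℝ) : Integrable (fun x => √(s ^ 2 + ‖g x‖ ^ 2)) μ := by
  refine ((integrable_const |s|).add hg.norm).mono' ?_ (ae_of_all _ fun x => ?_)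
  · exact (Real.continuous_sqrt.comp_aestronglyMeasurable
      (aestronglyMeasurable_const.add (hg.aestronglyMeasurable.norm.pow 2)))
  · simpa [abs_of_nonneg (Real.sqrt_nonneg _)] using Real.sqrt_sq_add_sq_le_abs_add_abs s ‖g x‖

theorem integral_norm_le_integral_sqrt_sq_add_norm_sq [IsFiniteMeasure μ] {g : X → E}
    (hg : Integrable g μ) (s : ℝ) :
    ∫ x, ‖g x‖ ∂μ ≤ ∫ x, √(s ^ 2 + ‖g x‖ ^ 2) ∂μ :=
  integral_mono hg.norm (hg.sqrt_sq_add_norm_sq s) fun x => by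
    simpa using Real.abs_le_sqrt_sq_add_sq s ‖g x‖

theorem integral_sqrt_sq_add_norm_sq_le [IsFiniteMeasure μ] {g : X → E}
    (hg : Integrable g μ) (s : ℝ) :
    ∫ x, √(s ^ 2 + ‖g x‖ ^ 2) ∂μ ≤ |s| * μ.real Set.univ + ∫ x, ‖g x‖ ∂μ := by
  calc ∫ x, √(s ^ 2 + ‖g x‖ ^ 2) ∂μ ≤ ∫ x, (|s| + ‖g x‖) ∂μ :=
        integral_mono (hg.sqrt_sq_add_norm_sq s) ((integrable_const _).add hg.norm) fun x => by
          simpa using Real.sqrt_sq_add_sq_le_abs_add_abs s ‖g x‖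
    _ = |s| * μ.real Set.univ + ∫ x, ‖g x‖ ∂μ := by
        rw [integral_add (integrable_const _) hg.norm, integral_const, smul_eq_mul, mul_comm]

theorem tendsto_integral_norm_of_tendsto_integral_norm_sub {ι : Type*} {l : Filter ι}
    {f : X → E} {F : ι → X → E} (hf : Integrable f μ) (hF : ∀ i, Integrable (F i) μ)
    (h : Tendsto (fun i => ∫ x, ‖F i x - f x‖ ∂μ) l (𝓝 0)) :
    Tendsto (fun i => ∫ x, ‖F i x‖ ∂μ) l (𝓝 (∫ x, ‖f x‖ ∂μ)) := by
  rw [tendsto_iff_norm_sub_tendsto_zero]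
  refine squeeze_zero (fun _ => norm_nonneg _) (fun i => ?_) h
  rw [← integral_sub (hF i).norm hf.norm]
  exact (norm_integral_le_integral_norm _).trans <|
    integral_mono ((hF i).norm.sub hf.norm).norm ((hF i).sub hf).norm fun x => by
      simpa using abs_norm_sub_norm_le (F i x) (f x)

theorem tendsto_integral_sqrt_sq_add_norm_sq [IsFiniteMeasure μ] {ι : Type*} {l : Filter ι}
    {f : X → E} {F : ι → X → E} (hf : Integrable f μ) (hF : ∀ i, Integrable (F i) μ)
    (h : Tendsto (fun i => ∫ x, ‖F i x - f x‖ ∂μ) l (𝓝 0)) {s : ι → ℝ}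
    (hs : Tendsto s l (𝓝 0)) :
    Tendsto (fun i => ∫ x, √(s i ^ 2 + ‖F i x‖ ^ 2) ∂μ) l (𝓝 (∫ x, ‖f x‖ ∂μ)) := by
  have hnorm := tendsto_integral_norm_of_tendsto_integral_norm_sub hf hF h
  have hupper : Tendsto (fun i => |s i| * μ.real Set.univ + ∫ x, ‖F i x‖ ∂μ) l
      (𝓝 (∫ x, ‖f x‖ ∂μ)) := by
    simpa using (hs.abs.mul_const (μ.real Set.univ)).add hnorm
  exact tendsto_of_tendsto_of_tendsto_of_le_of_le hnorm hupper
    (fun i => integral_norm_le_integral_sqrt_sq_add_norm_sq (hF i) (s i))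
    (fun i => integral_sqrt_sq_add_norm_sq_le (hF i) (s i))

end SmoothedNorm

theorem tGMS_energy_liminf_general {X E : Type*} [MeasurableSpace X] (μ : Measure X)
    (hμ : μ Set.univ < ⊤) [NormedAddCommGroup E]
    (f : X → E) (fn : ℕ → X → E)
    (hf : Integrable f μ) (hfn : ∀ n, Integrable (fn n) μ)
    (hL1 : Tendsto (fun n => ∫ x, ‖fn n x - f x‖ ∂μ) atTop (nhds 0))
    (t : ℕ → ℝ) (htop : Tendsto t atTop atTop) :
    ∫ x, ‖f x‖ ∂μ ≤
      liminf (fun n => ∫ x, Real.sqrt ((t n)⁻¹ ^ 2 + ‖fn n x‖ ^ 2) ∂μ) atTop := by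
  have : IsFiniteMeasure μ := ⟨hμ⟩
  exact (tendsto_integral_sqrt_sq_add_norm_sq hf hfn hL1
    (tendsto_inv_atTop_zero.comp htop)).liminf_eq.ge

/-- 'liminf' half of the Γ-convergence of the `t`-GMS energies to the total variation:
if `fₙ → f` in `L¹` and `tₙ → ∞`, then
`∫ ‖f‖ dμ ≤ liminf ∫ √(tₙ⁻² + ‖fₙ‖²) dμ`. -/
theorem tGMS_energy_liminf {X E : Type*} [MeasurableSpace X] (μ : Measure X)
    (hμ : μ Set.univ < ⊤) [NormedAddCommGroup E]
    (f : X → E) (fn : ℕ → X → E)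
    (hf : Integrable f μ) (hfn : ∀ n, Integrable (fn n) μ)
    (hL1 : Tendsto (fun n => ∫ x, ‖fn n x - f x‖ ∂μ) atTop (nhds 0))
    (t : ℕ → ℝ) (ht : ∀ n, 0 < t n) (htop : Tendsto t atTop atTop) :
    ∫ x, ‖f x‖ ∂μ ≤
      liminf (fun n => ∫ x, Real.sqrt ((t n)⁻¹ ^ 2 + ‖fn n x‖ ^ 2) ∂μ) atTop :=
  tGMS_energy_liminf_general μ hμ f fn hf hfn hL1 t htop
end
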